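/- (Holomorphic Hopf differential) Let Ω ⊆ ℂ be open and u : Ω → ℝ^m be C² with Δu(z) orthogonal to both u_x(z) and u_y(z) in ℝ^m for every z ∈ Ω. Then the function φ(z) := Σ_{i=1}^m (∂u^i/∂z)², where ∂u/∂z = (1/2)(u_x − i u_y), satisfies ∂φ/∂z̄ = 0; that is, the coefficient of the Hopf differential φ dz∧dz is holomorphic on Ω. -/

import Mathlib

/-!
Writing `u_z = (u_x - i u_y)/2`, we have `φ = ⟨u_z, u_z⟩` for the complex-bilinear extension of
the inner product, so `∂φ/∂z̄ = 2⟨u_{zz̄}, u_z⟩`. Symmetry of the mixed partials `u_{xy} = u_{yx}`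
gives `4 u_{zz̄} = Δu`, hence `∂φ/∂z̄ = ⟨Δu, u_x⟩/4 - i⟨Δu, u_y⟩/4 = 0`.
-/

open Complex Metric
open scoped RealInnerProductSpace

noncomputable section

/-- Euclidean space `ℝ^m`. -/
abbrev EucSp (m : ℕ) := EuclideanSpace ℝ (Fin m)

/-- Twice the Wirtinger derivative `∂/∂z̄` of an `ℝ`-linear map `ℂ → ℂ`. -/
def dbar : (ℂ →L[ℝ] ℂ) →ₗ[ℂ] ℂ where
  toFun L := L 1 + I * L I
  map_add' L M := by simp only [add_apply]; ring
  map_smul' c L := by simp only [smul_apply, smul_eq_mul, RingHom.id_apply]; ring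

section SecondDerivative

variable {E F : Type*} [NormedAddCommGroup E] [NormedSpace ℝ E]
  [NormedAddCommGroup F] [NormedSpace ℝ F] {Ω : Set E} {u : E → F} {z : E}

theorem hasFDerivWithinAt_fderivWithin_apply (hΩ : UniqueDiffOn ℝ Ω) (hu : ContDiffOn ℝ 2 u Ω)
    (hz : z ∈ Ω) (v : E) :
    HasFDerivWithinAt (fun w => fderivWithin ℝ u Ω w v)
      ((fderivWithin ℝ (fderivWithin ℝ u Ω) Ω z).flip v) Ω z := by
  have h := ((hu.fderivWithin hΩ (m := 1) (by norm_num)).differentiableOn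
    one_ne_zero z hz).hasFDerivWithinAt
  exact (ContinuousLinearMap.apply ℝ F v).hasFDerivAt.comp_hasFDerivWithinAt z h

theorem fderivWithin_fderivWithin_comm (hΩ : IsOpen Ω) (hu : ContDiffOn ℝ 2 u Ω)
    (hz : z ∈ Ω) (v w : E) :
    fderivWithin ℝ (fderivWithin ℝ u Ω) Ω z v w = fderivWithin ℝ (fderivWithin ℝ u Ω) Ω z w v :=
  (hu.contDiffWithinAt hz).isSymmSndFDerivWithinAt (by simp) hΩ.uniqueDiffOn
    (subset_closure (by rwa [hΩ.interior_eq])) hz v w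

end SecondDerivative

theorem hasFDerivWithinAt_sum_sq {ι : Type*} [Fintype ι] {f : ι → ℂ → ℂ}
    {f' : ι → ℂ →L[ℝ] ℂ} {s : Set ℂ} {z : ℂ} (h : ∀ i, HasFDerivWithinAt (f i) (f' i) s z) :
    HasFDerivWithinAt (fun w => ∑ i, f i w ^ 2) (∑ i, (2 * f i z) • f' i) s z := by
  refine HasFDerivWithinAt.fun_sum fun i _ => ?_
  simpa using (h i).pow 2

theorem EuclideanSpace.sum_sub_I_mul_mul {ι : Type*} [Fintype ι] (a v w : EuclideanSpace ℝ ι) :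
    ∑ i, ((v i : ℂ) - I * w i) * a i = (⟪a, v⟫ : ℂ) - I * ⟪a, w⟫ := by
  simp only [PiLp.inner_apply, RCLike.inner_apply, conj_trivial, ofReal_sum, ofReal_mul,
    Finset.mul_sum, ← Finset.sum_sub_distrib]
  exact Finset.sum_congr rfl fun i _ => by ring

section WirtingerComponent

variable {F : Type*} [NormedAddCommGroup F] [NormedSpace ℝ F] {Ω : Set ℂ} {u : ℂ → F} {z : ℂ}

/-- The `ℓ`-component of `∂u/∂z = (u_x - i u_y)/2`. -/
def partialZ (Ω : Set ℂ) (u : ℂ → F) (ℓ : F →L[ℝ] ℝ) (w : ℂ) : ℂ :=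
  (1/2 : ℂ) * ((ℓ (fderivWithin ℝ u Ω w 1) : ℂ) - I * ℓ (fderivWithin ℝ u Ω w I))

theorem hasFDerivWithinAt_partialZ (hΩ : IsOpen Ω) (hu : ContDiffOn ℝ 2 u Ω) (hz : z ∈ Ω)
    (ℓ : F →L[ℝ] ℝ) :
    HasFDerivWithinAt (partialZ Ω u ℓ) ((1/2 : ℂ) • ((ofRealCLM.comp ℓ).comp
      (fderivWithin ℝ (fun w => fderivWithin ℝ u Ω w 1) Ω z) - I • (ofRealCLM.comp ℓ).comp
      (fderivWithin ℝ (fun w => fderivWithin ℝ u Ω w I) Ω z))) Ω z := by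
  have hD : ∀ v, DifferentiableWithinAt ℝ (fun w => fderivWithin ℝ u Ω w v) Ω z := fun v =>
    (hasFDerivWithinAt_fderivWithin_apply hΩ.uniqueDiffOn hu hz v).differentiableWithinAt
  have hℓ : ∀ v, HasFDerivWithinAt (fun w => (ℓ (fderivWithin ℝ u Ω w v) : ℂ))
      ((ofRealCLM.comp ℓ).comp (fderivWithin ℝ (fun w => fderivWithin ℝ u Ω w v) Ω z)) Ω z :=
    fun v => (ofRealCLM.comp ℓ).hasFDerivAt.comp_hasFDerivWithinAt z (hD v).hasFDerivWithinAt
  exact ((hℓ 1).fun_sub ((hℓ I).const_mul I)).const_mul (1/2 : ℂ)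

theorem dbar_fderivWithin_partialZ (hΩ : IsOpen Ω) (hu : ContDiffOn ℝ 2 u Ω) (hz : z ∈ Ω)
    (ℓ : F →L[ℝ] ℝ) :
    dbar (fderivWithin ℝ (partialZ Ω u ℓ) Ω z) =
      (1/2 : ℂ) * ℓ (fderivWithin ℝ (fun w => fderivWithin ℝ u Ω w 1) Ω z 1 +
        fderivWithin ℝ (fun w => fderivWithin ℝ u Ω w I) Ω z I) := by
  set G := fderivWithin ℝ (fderivWithin ℝ u Ω) Ω z
  have hD : ∀ v, fderivWithin ℝ (fun w => fderivWithin ℝ u Ω w v) Ω z = G.flip v := fun v =>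
    (hasFDerivWithinAt_fderivWithin_apply hΩ.uniqueDiffOn hu hz v).fderivWithin
      (hΩ.uniqueDiffOn z hz)
  rw [(hasFDerivWithinAt_partialZ hΩ hu hz ℓ).fderivWithin (hΩ.uniqueDiffOn z hz), hD, hD]
  simp only [dbar, LinearMap.coe_mk, AddHom.coe_mk, map_smul, smul_apply, sub_apply, smul_eq_mul,
    ContinuousLinearMap.comp_apply, ContinuousLinearMap.flip_apply, ofRealCLM_apply, map_add,
    ofReal_add, show G I 1 = G 1 I from fderivWithin_fderivWithin_comm hΩ hu hz I 1]
  linear_combination (-(1/2) * (ℓ (G I I) : ℂ)) * I_sq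

end WirtingerComponent

theorem statement17 (m : ℕ) (Ω : Set ℂ) (hΩ : IsOpen Ω)
    (u : ℂ → EucSp m) (hu : ContDiffOn ℝ 2 u Ω)
    (ux uy uxx uyy : ℂ → EucSp m)
    (hux : ux = fun z => fderivWithin ℝ u Ω z 1)
    (huy : uy = fun z => fderivWithin ℝ u Ω z Complex.I)
    (huxx : uxx = fun z => fderivWithin ℝ ux Ω z 1)
    (huyy : uyy = fun z => fderivWithin ℝ uy Ω z Complex.I)
    (horth : ∀ z ∈ Ω, ⟪uxx z + uyy z, ux z⟫ = 0 ∧ ⟪uxx z + uyy z, uy z⟫ = 0)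
    (φ : ℂ → ℂ)
    (hφ : φ = fun z => ∑ i : Fin m,
      ((1/2 : ℂ) * (((ux z i : ℝ) : ℂ) - Complex.I * ((uy z i : ℝ) : ℂ))) ^ 2) :
    ∀ z ∈ Ω,
      DifferentiableWithinAt ℝ φ Ω z ∧
      (fderivWithin ℝ φ Ω z) 1 + Complex.I * (fderivWithin ℝ φ Ω z) Complex.I = 0 := by
  intro z hz
  subst hux huy
  have hφ' := hasFDerivWithinAt_sum_sq fun i => (hasFDerivWithinAt_partialZ hΩ hu hz
    (EuclideanSpace.proj (𝕜 := ℝ) i)).differentiableWithinAt.hasFDerivWithinAt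
  rw [← show φ = fun w => ∑ i, partialZ Ω u (EuclideanSpace.proj i) w ^ 2 from hφ] at hφ'
  refine ⟨hφ'.differentiableWithinAt, ?_⟩
  change dbar (fderivWithin ℝ φ Ω z) = 0
  rw [hφ'.fderivWithin (hΩ.uniqueDiffOn z hz)]
  simp only [map_sum, map_smul, smul_eq_mul, dbar_fderivWithin_partialZ hΩ hu hz,
    ← show uxx z = _ from congrFun huxx z, ← show uyy z = _ from congrFun huyy z]
  obtain ⟨hx, hy⟩ := horth z hz
  calc ∑ i, 2 * partialZ Ω u (EuclideanSpace.proj i) z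
          * ((1/2 : ℂ) * EuclideanSpace.proj i (uxx z + uyy z))
      = (1/2 : ℂ) * ∑ i, ((fderivWithin ℝ u Ω z 1 i : ℂ) - I * fderivWithin ℝ u Ω z I i)
          * (uxx z + uyy z) i := by
        rw [Finset.mul_sum]
        exact Finset.sum_congr rfl fun i _ => by simp only [partialZ, PiLp.proj_apply]; ring
    _ = 0 := by
        rw [EuclideanSpace.sum_sub_I_mul_mul, hx, hy]
        simp
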